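/- arXiv:1210.4959 — 2 statements merged into one kernel-verified Lean document; each statement's English description precedes it below -/
import Mathlib

section
/- For every point P of S there exists a point Q of S with Q ≠ P such that the line through P and Q is a halving line of S. Equivalently, the underlying graph of S has no isolated vertices. -/
/-- Planar cross product (signed area determinant) of two vectors in `ℝ × ℝ`. -/
def det2 (u v : ℝ × ℝ) : ℝ := u.1 * v.2 - u.2 * v.1

/-- Dot product of two vectors in `ℝ × ℝ`. -/
def dot2 (u v : ℝ × ℝ) : ℝ := u.1 * v.1 + u.2 * v.2

/-- A finite set of points of the plane is in general position if no three
distinct points of it are collinear. -/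
def GenPos (S : Finset (ℝ × ℝ)) : Prop :=
  ∀ P ∈ S, ∀ Q ∈ S, ∀ R ∈ S, P ≠ Q → P ≠ R → Q ≠ R →
    ¬ Collinear ℝ ({P, Q, R} : Set (ℝ × ℝ))

/-- The line through the two distinct points `P, Q ∈ S` is a halving line of `S`:
each of the two open half-planes it determines contains exactly
`(S.card - 2) / 2` points of `S`. -/
def IsHalving (S : Finset (ℝ × ℝ)) (P Q : ℝ × ℝ) : Prop :=
  P ∈ S ∧ Q ∈ S ∧ P ≠ Q ∧
  {X ∈ (S : Set (ℝ × ℝ)) | 0 < det2 (Q - P) (X - P)}.ncard = (S.card - 2) / 2 ∧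
  {X ∈ (S : Set (ℝ × ℝ)) | det2 (Q - P) (X - P) < 0}.ncard = (S.card - 2) / 2

/-- Degree of a point in the underlying graph of `S`: the number of points `Q`
such that the line `PQ` is a halving line of `S`. -/
noncomputable def hdeg (S : Finset (ℝ × ℝ)) (P : ℝ × ℝ) : ℕ :=
  {Q : ℝ × ℝ | IsHalving S P Q}.ncard

/-- The number of halving lines of `S`, counted as unordered pairs of points. -/
noncomputable def numHalvingLines (S : Finset (ℝ × ℝ)) : ℕ :=
  {e : Finset (ℝ × ℝ) | ∃ P Q : ℝ × ℝ, e = {P, Q} ∧ IsHalving S P Q}.ncard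

/-- The underlying graph of `S`: vertices are the points of `S`, and two points
are adjacent exactly when the line through them is a halving line of `S`. -/
def underlyingGraph (S : Finset (ℝ × ℝ)) : SimpleGraph {x : ℝ × ℝ // x ∈ S} where
  Adj P Q := IsHalving S P.1 Q.1 ∧ IsHalving S Q.1 P.1
  symm := ⟨fun _ _ h => ⟨h.2, h.1⟩⟩
  loopless := ⟨fun _ h => h.1.2.2.1 rfl⟩

/-!
Fix `P ∈ S`; the other `2K + 1` points are pairwise non-collinear with `P`. Choose a direction
`b` parallel to none of the lines `PX`. The remaining lines through `P` are parametrised by a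
real number `r`, the point `X` lying on the line of parameter `t X`, and `X` is on the positive
side of the line of parameter `r` iff `0 < s X * (r - t X)`, where the sign of `s X` says on which
side of the line through `P` in direction `b` the point `X` lies. As `r` increases, the number of
points on the positive side changes by one at each `t X`, from the number of points on one side
of that line to the number on the other. These add up to `2K + 1`, so some `r = t Q` gives
exactly `K`, and then `PQ` is a halving line.
-/

open Finset

lemma det2_mul_det2 (a b v w : ℝ × ℝ) :
    det2 a b * det2 v w = det2 a v * det2 b w - det2 a w * det2 b v := by
  simp only [det2]; ring

lemma eq_smul_of_det2_eq_zero {u v : ℝ × ℝ} (hu : u ≠ 0) (h : det2 u v = 0) :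
    v = (dot2 u v / dot2 u u) • u := by
  have hu' : dot2 u u ≠ 0 := fun h0 => hu (Prod.ext_iff.2 (mul_self_add_mul_self_eq_zero.1 h0))
  simp only [det2] at h
  ext <;> simp only [Prod.smul_fst, Prod.smul_snd, smul_eq_mul] <;> field_simp <;> simp only [dot2]
  · linear_combination (-u.2) * h
  · linear_combination u.1 * h

lemma collinear_of_det2_sub_eq_zero {P X Y : ℝ × ℝ} (hX : X ≠ P)
    (h : det2 (X - P) (Y - P) = 0) : Collinear ℝ ({P, X, Y} : Set (ℝ × ℝ)) := by
  have hY : Y = AffineMap.lineMap P X (dot2 (X - P) (Y - P) / dot2 (X - P) (X - P)) := by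
    rw [AffineMap.lineMap_apply, vsub_eq_sub, vadd_eq_add,
      ← eq_smul_of_det2_eq_zero (sub_ne_zero.2 hX) h, sub_add_cancel]
  have hmem : Y ∈ line[ℝ, P, X] := hY ▸ AffineMap.lineMap_mem_affineSpan_pair _ _ _
  have hperm : ({P, X, Y} : Set (ℝ × ℝ)) = {Y, P, X} := by
    ext; simp only [Set.mem_insert_iff, Set.mem_singleton_iff]; tauto
  rw [hperm]
  exact collinear_insert_of_mem_affineSpan_pair hmem

lemma GenPos.det2_sub_ne_zero {S : Finset (ℝ × ℝ)} (hS : GenPos S) {P X Y : ℝ × ℝ}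
    (hP : P ∈ S) (hX : X ∈ S) (hY : Y ∈ S) (hXP : X ≠ P) (hYP : Y ≠ P) (hXY : X ≠ Y) :
    det2 (X - P) (Y - P) ≠ 0 := fun h =>
  hS P hP X hX Y hY hXP.symm hYP.symm hXY (collinear_of_det2_sub_eq_zero hXP h)

lemma exists_det2_eq_one_and_det2_ne_zero {α : Type*} (T : Finset α) (v : α → ℝ × ℝ)
    (hv : ∀ X ∈ T, v X ≠ 0) : ∃ a b, det2 a b = 1 ∧ ∀ X ∈ T, det2 b (v X) ≠ 0 := by
  obtain ⟨c, hc⟩ := Infinite.exists_notMem_finset (T.image fun X => (v X).2 / (v X).1)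
  refine ⟨(0, -1), (1, c), by simp [det2], fun X hX h => ?_⟩
  simp only [det2, one_mul] at h
  by_cases h1 : (v X).1 = 0
  · exact hv X hX (Prod.ext h1 (by simpa [h1] using h))
  · exact hc (mem_image.2 ⟨X, hX, by field_simp; linarith⟩)

lemma card_filter_pos_add_card_filter_neg {α β : Type*} [LinearOrder β] [Zero β] (T : Finset α)
    (g : α → β) : #{X ∈ T | 0 < g X} + #{X ∈ T | g X < 0} = #{X ∈ T | g X ≠ 0} := by
  classical
  rw [← card_union_of_disjoint (disjoint_filter.2 fun _ _ h h' => (lt_asymm h h').elim),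
    ← filter_or]
  simp only [ne_iff_lt_or_gt, or_comm]

section Sweep

variable {α : Type*} (s t : α → ℝ)

lemma card_filter_insert_of_notMem [DecidableEq α] {T : Finset α} {a : α} (ha : a ∉ T)
    (p : α → Prop) [DecidablePred p] :
    #{X ∈ insert a T | p X} = #{X ∈ T | p X} + if p a then 1 else 0 := by
  rw [card_filter, card_filter, sum_insert ha, add_comm]

lemma exists_card_filter_mul_sub_pos_eq (T : Finset α) (ht : Set.InjOn t T) (m : ℕ)
    (hA : #{X ∈ T | s X < 0} ≤ m) (hB : m < #{X ∈ T | 0 < s X}) :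
    ∃ Q ∈ T, #{X ∈ T | 0 < s X * (t Q - t X)} = m := by
  classical
  induction T using Finset.induction_on_max_value t generalizing m with
  | empty => simp at hB
  | insert M T hM hmax ih =>
    have hlt : ∀ X ∈ T, t X < t M := fun X hX => (hmax X hX).lt_of_ne fun h =>
      ne_of_mem_of_not_mem hX hM (ht (mem_insert_of_mem hX) (mem_insert_self M T) h)
    have ht' : Set.InjOn t T := ht.mono (by simp)
    have hcount : ∀ Q ∈ T, #{X ∈ insert M T | 0 < s X * (t Q - t X)} =
        #{X ∈ T | 0 < s X * (t Q - t X)} + if s M < 0 then 1 else 0 := fun Q hQ => by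
      have hQM : t Q - t M < 0 := sub_neg.2 (hlt Q hQ)
      have hiff : 0 < s M * (t Q - t M) ↔ s M < 0 := by simp [mul_pos_iff, hQM, hQM.not_gt]
      simp only [card_filter_insert_of_notMem hM, hiff]
    have hcountM : #{X ∈ insert M T | 0 < s X * (t M - t X)} = #{X ∈ T | 0 < s X} := by
      rw [card_filter_insert_of_notMem hM, sub_self, mul_zero, if_neg (lt_irrefl 0), add_zero]
      congr 1
      exact filter_congr fun X hX => mul_pos_iff_of_pos_right (sub_pos.2 (hlt X hX))
    rw [card_filter_insert_of_notMem hM] at hA hB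
    rcases lt_trichotomy (s M) 0 with hM0 | hM0 | hM0
    · simp only [hM0, if_true, lt_asymm hM0, if_false] at hA hB
      obtain ⟨Q, hQ, hQm⟩ := ih ht' (m - 1) (by omega) (by omega)
      exact ⟨Q, mem_insert_of_mem hQ, by rw [hcount Q hQ, hQm, if_pos hM0]; omega⟩
    · simp only [hM0, lt_irrefl, if_false, add_zero] at hA hB
      obtain ⟨Q, hQ, hQm⟩ := ih ht' m hA hB
      exact ⟨Q, mem_insert_of_mem hQ, by simp only [hcount Q hQ, hQm, hM0, lt_irrefl, if_false,
        add_zero]⟩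
    · simp only [hM0, if_true, lt_asymm hM0, if_false, add_zero] at hA hB
      rcases (Nat.lt_succ_iff.1 hB).lt_or_eq with hm | rfl
      · obtain ⟨Q, hQ, hQm⟩ := ih ht' m hA hm
        exact ⟨Q, mem_insert_of_mem hQ, by rw [hcount Q hQ, hQm, if_neg (lt_asymm hM0), add_zero]⟩
      · exact ⟨M, mem_insert_self M T, hcountM⟩

lemma exists_card_filter_mul_sub_pos_eq_and_neg_eq (T : Finset α) (hs : ∀ X ∈ T, s X ≠ 0)
    (ht : Set.InjOn t T) {K : ℕ} (hT : #T = 2 * K + 1) :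
    ∃ Q ∈ T, #{X ∈ T | 0 < s X * (t Q - t X)} = K ∧ #{X ∈ T | s X * (t Q - t X) < 0} = K := by
  classical
  have hsides : ∀ Q ∈ T,
      #{X ∈ T | 0 < s X * (t Q - t X)} + #{X ∈ T | s X * (t Q - t X) < 0} = 2 * K := by
    intro Q hQ
    have hzero : {X ∈ T | s X * (t Q - t X) ≠ 0} = T.erase Q := by
      ext X
      simp only [mem_filter, mem_erase, ne_eq, mul_eq_zero, sub_eq_zero, not_or]
      constructor
      · rintro ⟨hX, -, hne⟩
        exact ⟨fun h => hne (h ▸ rfl), hX⟩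
      · rintro ⟨hne, hX⟩
        exact ⟨hX, hs X hX, fun h => hne (ht hX hQ h.symm)⟩
    rw [card_filter_pos_add_card_filter_neg, hzero, card_erase_of_mem hQ, hT, Nat.add_sub_cancel]
  have hsigns : #{X ∈ T | 0 < s X} + #{X ∈ T | s X < 0} = 2 * K + 1 := by
    rw [card_filter_pos_add_card_filter_neg, filter_true_of_mem hs, hT]
  rcases le_or_gt #{X ∈ T | s X < 0} K with hA | hA
  · obtain ⟨Q, hQ, hQK⟩ := exists_card_filter_mul_sub_pos_eq s t T ht K hA (by omega)
    exact ⟨Q, hQ, hQK, by have := hsides Q hQ; omega⟩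
  · obtain ⟨Q, hQ, hQK⟩ := exists_card_filter_mul_sub_pos_eq (-s) t T ht K
      (by simp only [Pi.neg_apply, neg_lt_zero]; omega) (by simpa only [Pi.neg_apply, neg_pos])
    simp only [Pi.neg_apply, neg_mul, neg_pos] at hQK
    exact ⟨Q, hQ, by have := hsides Q hQ; omega, hQK⟩

end Sweep

lemma exists_card_filter_det2_pos_eq_and_neg_eq {α : Type*} (T : Finset α) (v : α → ℝ × ℝ)
    (hv0 : ∀ X ∈ T, v X ≠ 0) (hv : ∀ X ∈ T, ∀ Y ∈ T, X ≠ Y → det2 (v X) (v Y) ≠ 0) {K : ℕ}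
    (hT : #T = 2 * K + 1) :
    ∃ Q ∈ T, #{X ∈ T | 0 < det2 (v Q) (v X)} = K ∧ #{X ∈ T | det2 (v Q) (v X) < 0} = K := by
  obtain ⟨a, b, hab, hb⟩ := exists_det2_eq_one_and_det2_ne_zero T v hv0
  -- `s X` says on which side of `ℝ • b` the vector `v X` lies, `t X` parametrises `ℝ • v X`.
  set s := fun X => det2 b (v X)
  set t := fun X => det2 a (v X) / det2 b (v X)
  have hdet : ∀ X ∈ T, ∀ Y ∈ T, det2 (v X) (v Y) = s X * (s Y * (t X - t Y)) := by
    intro X hX Y hY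
    have hXY := det2_mul_det2 a b (v X) (v Y)
    have hsX : s X ≠ 0 := hb X hX
    have hsY : s Y ≠ 0 := hb Y hY
    simp only [s, t] at hsX hsY ⊢
    field_simp
    linear_combination hXY - det2 (v X) (v Y) * hab
  have ht : Set.InjOn t T := fun X hX Y hY h => by_contra fun hXY =>
    hv X hX Y hY hXY (by rw [hdet X hX Y hY, h, sub_self, mul_zero, mul_zero])
  obtain ⟨Q, hQ, hpos, hneg⟩ := exists_card_filter_mul_sub_pos_eq_and_neg_eq s t T hb ht hT
  have hfilter : ∀ p : ℝ → Prop, ∀ [DecidablePred p],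
      {X ∈ T | p (det2 (v Q) (v X))} = {X ∈ T | p (s Q • (s X * (t Q - t X)))} :=
    fun p _ => filter_congr fun X hX => by rw [hdet Q hQ X hX, smul_eq_mul]
  refine ⟨Q, hQ, ?_⟩
  rw [hfilter (0 < ·), hfilter (· < 0)]
  rcases (show s Q ≠ 0 from hb Q hQ).lt_or_gt with hsQ | hsQ
  · simp only [smul_pos_iff_of_neg_left hsQ, smul_neg_iff_of_neg_left hsQ]
    exact ⟨hneg, hpos⟩
  · simp only [smul_pos_iff_of_pos_left hsQ, smul_neg_iff_of_pos_left hsQ]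
    exact ⟨hpos, hneg⟩

theorem stmt_0_general (S : Finset (ℝ × ℝ)) (heven : Even S.card)
    (hgp : GenPos S) :
    ∀ P ∈ S, ∃ Q ∈ S, Q ≠ P ∧ IsHalving S P Q := by
  intro P hP
  obtain ⟨r, hr⟩ := heven
  have hT : #(S.erase P) = 2 * (r - 1) + 1 := by
    have := card_pos.2 ⟨P, hP⟩
    rw [card_erase_of_mem hP]; omega
  obtain ⟨Q, hQ, hpos, hneg⟩ := exists_card_filter_det2_pos_eq_and_neg_eq (S.erase P) (· - P)
    (fun X hX => sub_ne_zero.2 (ne_of_mem_erase hX))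
    (fun X hX Y hY hXY => hgp.det2_sub_ne_zero hP (mem_of_mem_erase hX) (mem_of_mem_erase hY)
      (ne_of_mem_erase hX) (ne_of_mem_erase hY) hXY) hT
  have hside : ∀ p : ℝ → Prop, [DecidablePred p] → ¬ p 0 →
      {X ∈ (S : Set (ℝ × ℝ)) | p (det2 (Q - P) (X - P))}.ncard =
        #{X ∈ S.erase P | p (det2 (Q - P) (X - P))} := by
    intro p _ hp0
    have hPQ : P ∉ {X ∈ S | p (det2 (Q - P) (X - P))} := fun h =>
      hp0 (by simpa [det2] using (mem_filter.1 h).2)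
    rw [filter_erase, erase_eq_of_notMem hPQ, ← Set.ncard_coe_finset, coe_filter]
    rfl
  have hQP := ne_of_mem_erase hQ
  refine ⟨Q, mem_of_mem_erase hQ, hQP, hP, mem_of_mem_erase hQ, hQP.symm, ?_, ?_⟩
  · rw [hside (0 < ·) (lt_irrefl 0), hpos]; omega
  · rw [hside (· < 0) (lt_irrefl 0), hneg]; omega

/-- every point of `S` lies on some halving line; the underlying
graph of `S` has no isolated vertices. -/
theorem stmt_0 (S : Finset (ℝ × ℝ)) (heven : Even S.card) (h4 : 4 ≤ S.card)
    (hgp : GenPos S) :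
    ∀ P ∈ S, ∃ Q ∈ S, Q ≠ P ∧ IsHalving S P Q :=
  stmt_0_general S heven hgp
end

section
/- Let V, P, Q ∈ S be distinct points such that the lines VP and VQ are both halving lines of S. Then there exists a point R ∈ S, distinct from V, P, Q, such that VR is a halving line of S and the three vectors P−V, Q−V, R−V do not all lie in a single closed half-plane: there is no nonzero vector u ∈ ℝ² with ⟨u, P−V⟩ ≥ 0, ⟨u, Q−V⟩ ≥ 0 and ⟨u, R−V⟩ ≥ 0. -/
/-!
Rotate a directed line through `V` from direction `P - V` to `Q - V`, its direction running along
the segment `(1 - t) • (P - V) + t • (Q - V)`, `t ∈ [0, 1]`, and count the points of `S \ {V, Q}`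
on its closed right side. With `k = (|S| - 2) / 2`, the count is `k + 1` at `t = 0` (the `k` points
right of `VP`, and `P`) and `k` at `t = 1`. At the last time `t` at which it is still `k + 1`,
general position leaves a single point `R` on the line, and `R` must cross to the left side just
afterwards. Hence `R - V` points backwards along the line, so it is a negative combination of
`P - V` and `Q - V`, and exactly `k` points lie strictly on each side of `VR`.
-/

open Finset Filter Topology
open AffineMap (lineMap)

section SignCrossing

variable {ι : Type*} (T : Finset ι) (g : ι → ℝ → ℝ)

lemma eventually_sign_stable (hg : ∀ i ∈ T, Continuous (g i)) (t₀ : ℝ) :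
    ∀ᶠ t in 𝓝 t₀, ∀ i ∈ T, (0 < g i t₀ → 0 < g i t) ∧ (g i t₀ < 0 → g i t < 0) := by
  refine (eventually_all_finset T).2 fun i hi => ?_
  have hcont := (hg i hi).continuousAt (x := t₀)
  by_cases hpos : 0 < g i t₀
  · filter_upwards [hcont.eventually (eventually_gt_nhds hpos)] with t ht
    exact ⟨fun _ => ht, fun h => absurd h hpos.not_gt⟩
  by_cases hneg : g i t₀ < 0
  · filter_upwards [hcont.eventually (eventually_lt_nhds hneg)] with t ht
    exact ⟨fun h => absurd h hpos, fun _ => ht⟩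
  · exact .of_forall fun t => ⟨fun h => absurd h hpos, fun h => absurd h hneg⟩

lemma isClosed_setOf_lt_card_filter_nonneg (hg : ∀ i ∈ T, Continuous (g i)) (k : ℕ) :
    IsClosed {t | k < #(T.filter fun i => 0 ≤ g i t)} := by
  refine isOpen_compl_iff.1 (isOpen_iff_mem_nhds.2 fun t₀ ht₀ => ?_)
  filter_upwards [eventually_sign_stable T g hg t₀] with t ht
  refine not_lt.2 (le_trans (card_le_card fun i hi => ?_) (not_lt.1 ht₀))
  rw [mem_filter] at hi ⊢
  exact ⟨hi.1, not_lt.1 fun h => (not_lt.2 hi.2) ((ht i hi.1).2 h)⟩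

theorem exists_sign_crossing (hg : ∀ i ∈ T, Continuous (g i)) {k : ℕ}
    (h0 : k < #(T.filter fun i => 0 ≤ g i 0)) (h1 : #(T.filter fun i => 0 ≤ g i 1) ≤ k) :
    ∃ t ∈ Set.Ico (0 : ℝ) 1, ∃ t' ∈ Set.Ioc t 1,
      k < #(T.filter fun i => 0 ≤ g i t) ∧ #(T.filter fun i => 0 ≤ g i t') ≤ k ∧
      ∀ i ∈ T, 0 < g i t → 0 < g i t' := by
  obtain ⟨t, ⟨⟨ht0, ht1⟩, htA⟩, htmax⟩ :=
    (isCompact_Icc.inter_right (isClosed_setOf_lt_card_filter_nonneg T g hg k)).exists_isGreatest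
      ⟨0, ⟨le_rfl, zero_le_one⟩, h0⟩
  have ht1 : t < 1 := ht1.lt_of_ne fun h => (h ▸ h1).not_gt htA
  have hnear : ∀ᶠ t' in 𝓝[>] t,
      ((∀ i ∈ T, (0 < g i t → 0 < g i t') ∧ (g i t < 0 → g i t' < 0)) ∧ t' < 1) ∧ t < t' :=
    (((eventually_sign_stable T g hg t).and (eventually_lt_nhds ht1)).filter_mono
      nhdsWithin_le_nhds).and self_mem_nhdsWithin
  obtain ⟨t', ⟨ht', ht'1⟩, htt'⟩ := hnear.exists
  refine ⟨t, ⟨ht0, ht1⟩, t', ⟨htt', ht'1.le⟩, htA, not_lt.1 fun h => ?_, fun i hi => (ht' i hi).1⟩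
  exact (htmax ⟨⟨ht0.trans htt'.le, ht'1.le⟩, h⟩).not_gt htt'

theorem exists_downcrossing_of_card_drop {t t' : ℝ} {k : ℕ}
    (hsimple : ∀ i ∈ T, ∀ j ∈ T, g i t = 0 → g j t = 0 → i = j)
    (ht : k < #(T.filter fun i => 0 ≤ g i t)) (ht' : #(T.filter fun i => 0 ≤ g i t') ≤ k)
    (hpos : ∀ i ∈ T, 0 < g i t → 0 < g i t') :
    ∃ z ∈ T, g z t = 0 ∧ g z t' < 0 ∧ #(T.filter fun i => 0 < g i t) = k := by
  classical
  have hsplit : T.filter (fun i => 0 ≤ g i t) =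
      T.filter (fun i => 0 < g i t) ∪ T.filter (fun i => g i t = 0) := by
    rw [← filter_or]
    exact filter_congr fun i _ => le_iff_lt_or_eq.trans (or_congr_right eq_comm)
  have hzero : #(T.filter fun i => g i t = 0) ≤ 1 :=
    card_le_one.2 fun i hi j hj => hsimple i (mem_filter.1 hi).1 j (mem_filter.1 hj).1
      (mem_filter.1 hi).2 (mem_filter.1 hj).2
  have hpos_sub : T.filter (fun i => 0 < g i t) ⊆ T.filter (fun i => 0 ≤ g i t') := fun i hi => by
    rw [mem_filter] at hi ⊢
    exact ⟨hi.1, (hpos i hi.1 hi.2).le⟩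
  have hle := card_union_le (T.filter fun i => 0 < g i t) (T.filter fun i => g i t = 0)
  rw [← hsplit] at hle
  have hcard : #(T.filter fun i => 0 < g i t) = k := by
    have := card_le_card hpos_sub
    omega
  obtain ⟨z, hz⟩ : (T.filter fun i => g i t = 0).Nonempty := by
    rw [← card_pos]
    omega
  rw [mem_filter] at hz
  refine ⟨z, hz.1, hz.2, not_le.1 fun hz' => ?_, hcard⟩
  have hz_notMem : z ∉ T.filter (fun i => 0 < g i t) := by simp [hz.2]
  have := card_le_card (insert_subset (mem_filter.2 ⟨hz.1, hz'⟩) hpos_sub)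
  rw [card_insert_of_notMem hz_notMem] at this
  omega

end SignCrossing

lemma det2_self (u : ℝ × ℝ) : det2 u u = 0 := by rw [det2]; ring

lemma det2_comm (u v : ℝ × ℝ) : det2 u v = -det2 v u := by rw [det2, det2]; ring

lemma det2_zero_left (v : ℝ × ℝ) : det2 0 v = 0 := by simp [det2]

lemma det2_zero_right (u : ℝ × ℝ) : det2 u 0 = 0 := by simp [det2]

lemma det2_smul_left (r : ℝ) (u v : ℝ × ℝ) : det2 (r • u) v = r * det2 u v := by
  simp only [det2, Prod.smul_fst, Prod.smul_snd, smul_eq_mul]; ring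

lemma det2_lineMap_right (u a b : ℝ × ℝ) (t : ℝ) :
    det2 u (lineMap a b t) = (1 - t) * det2 u a + t * det2 u b := by
  simp only [AffineMap.lineMap_apply_module, det2, Prod.fst_add, Prod.snd_add, Prod.smul_fst,
    Prod.smul_snd, smul_eq_mul]
  ring

lemma det2_lineMap_lineMap (a b : ℝ × ℝ) (s t : ℝ) :
    det2 (lineMap a b s) (lineMap a b t) = (t - s) * det2 a b := by
  simp only [AffineMap.lineMap_apply_module, det2, Prod.fst_add, Prod.snd_add, Prod.smul_fst,
    Prod.smul_snd, smul_eq_mul]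
  ring

lemma lineMap_ne_zero_of_det2_ne_zero {a b : ℝ × ℝ} (hab : det2 a b ≠ 0) (t : ℝ) :
    lineMap a b t ≠ 0 := fun h => hab <| by
  simpa [h, det2_zero_left] using (det2_lineMap_lineMap a b t (t + 1)).symm

lemma exists_eq_smul_of_det2_eq_zero {u v : ℝ × ℝ} (hu : u ≠ 0) (h : det2 v u = 0) :
    ∃ r : ℝ, v = r • u := by
  rw [det2] at h
  by_cases h1 : u.1 = 0
  · have h2 : u.2 ≠ 0 := fun h2 => hu (Prod.ext h1 h2)
    refine ⟨v.2 / u.2, Prod.ext ?_ ?_⟩ <;> simp only [Prod.smul_fst, Prod.smul_snd, smul_eq_mul]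
    · simpa [h1, h2] using h
    · field_simp
  · refine ⟨v.1 / u.1, Prod.ext ?_ ?_⟩ <;> simp only [Prod.smul_fst, Prod.smul_snd, smul_eq_mul]
    · field_simp
    · field_simp
      linear_combination -h

lemma exists_neg_smul_of_det2_lineMap {a b z : ℝ × ℝ} (hab : 0 < det2 a b) {t t' : ℝ}
    (htt' : t < t') (ht : det2 z (lineMap a b t) = 0)
    (ht' : det2 z (lineMap a b t') < 0) :
    ∃ μ : ℝ, μ < 0 ∧ z = μ • lineMap a b t := by
  obtain ⟨μ, rfl⟩ := exists_eq_smul_of_det2_eq_zero (lineMap_ne_zero_of_det2_ne_zero hab.ne' t) ht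
  rw [det2_smul_left, det2_lineMap_lineMap] at ht'
  exact ⟨μ, neg_of_mul_neg_left ht' (mul_pos (sub_pos.2 htt') hab).le, rfl⟩

lemma eq_zero_of_dot2_nonneg_of_det2 {a b z u : ℝ × ℝ} (hab : 0 < det2 a b)
    (haz : det2 a z < 0) (hbz : 0 < det2 b z)
    (ha : 0 ≤ dot2 u a) (hb : 0 ≤ dot2 u b) (hz : 0 ≤ dot2 u z) : u = 0 := by
  have hz_expand : dot2 u z * det2 a b = det2 a z * dot2 u b - det2 b z * dot2 u a := by
    simp only [dot2, det2]; ring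
  have hua : dot2 u a = 0 := by
    nlinarith [mul_nonneg hz hab.le, mul_nonneg (neg_nonneg.2 haz.le) hb]
  have hub : dot2 u b = 0 := by nlinarith [mul_nonneg hz hab.le, mul_nonneg hbz.le ha]
  have hu1 : u.1 * det2 a b = dot2 u a * b.2 - dot2 u b * a.2 := by simp only [dot2, det2]; ring
  have hu2 : u.2 * det2 a b = dot2 u b * a.1 - dot2 u a * b.1 := by simp only [dot2, det2]; ring
  rw [hua, hub] at hu1 hu2
  exact Prod.ext ((mul_eq_zero.1 (by linarith)).resolve_right hab.ne')
    ((mul_eq_zero.1 (by linarith)).resolve_right hab.ne')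

lemma collinear_of_det2_eq_zero {P Q R : ℝ × ℝ} (h : det2 (Q - P) (R - P) = 0) :
    Collinear ℝ ({P, Q, R} : Set (ℝ × ℝ)) := by
  rcases eq_or_ne Q P with rfl | hQP
  · simpa using collinear_pair ℝ Q R
  obtain ⟨r, hr⟩ := exists_eq_smul_of_det2_eq_zero (sub_ne_zero.2 hQP)
    (by rw [det2_comm, h, neg_zero])
  have hR : R ∈ line[ℝ, P, Q] := by
    convert AffineMap.lineMap_mem_affineSpan_pair r P Q using 1
    rw [AffineMap.lineMap_apply, vsub_eq_sub, vadd_eq_add, ← hr, sub_add_cancel]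
  rw [Set.pair_comm, Set.insert_comm]
  exact collinear_insert_of_mem_affineSpan_pair hR

lemma isHalving_iff {S : Finset (ℝ × ℝ)} {V W : ℝ × ℝ} :
    IsHalving S V W ↔ V ∈ S ∧ W ∈ S ∧ V ≠ W ∧
      #(S.filter fun X => 0 < det2 (W - V) (X - V)) = (#S - 2) / 2 ∧
      #(S.filter fun X => det2 (W - V) (X - V) < 0) = (#S - 2) / 2 := by
  have hcoe (p : ℝ × ℝ → Prop) [DecidablePred p] :
      {X ∈ (S : Set (ℝ × ℝ)) | p X}.ncard = #(S.filter p) := by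
    rw [← Set.ncard_coe_finset, coe_filter]; rfl
  simp only [IsHalving, hcoe]

namespace GenPos

variable {S : Finset (ℝ × ℝ)} {V W Y : ℝ × ℝ}

lemma eq_of_det2_eq_zero (hgp : GenPos S) (hV : V ∈ S) (hW : W ∈ S) (hY : Y ∈ S)
    (hVW : V ≠ W) (hVY : V ≠ Y) (h : det2 (W - V) (Y - V) = 0) : Y = W :=
  by_contra fun hYW => hgp V hV W hW Y hY hVW hVY (Ne.symm hYW) (collinear_of_det2_eq_zero h)

lemma eq_of_det2_eq_zero_of_det2_eq_zero (hgp : GenPos S) {d : ℝ × ℝ} (hd : d ≠ 0) (hV : V ∈ S)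
    (hW : W ∈ S) (hY : Y ∈ S) (hVW : V ≠ W) (hVY : V ≠ Y) (hWd : det2 (W - V) d = 0)
    (hYd : det2 (Y - V) d = 0) : Y = W := by
  obtain ⟨r, hr⟩ := exists_eq_smul_of_det2_eq_zero hd hWd
  obtain ⟨s, hs⟩ := exists_eq_smul_of_det2_eq_zero hd hYd
  refine hgp.eq_of_det2_eq_zero hV hW hY hVW hVY ?_
  rw [hr, hs, det2_smul_left, det2_comm, det2_smul_left, det2_self]
  ring

lemma card_filter_det2_pos_add_card_filter_det2_neg (hgp : GenPos S) (hV : V ∈ S) (hW : W ∈ S)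
    (hVW : V ≠ W) :
    #(S.filter fun X => 0 < det2 (W - V) (X - V)) +
      #(S.filter fun X => det2 (W - V) (X - V) < 0) + 2 = #S := by
  classical
  have hzero : S.filter (fun X => det2 (W - V) (X - V) = 0) = {V, W} := by
    ext X
    simp only [mem_filter, mem_insert, mem_singleton]
    constructor
    · rintro ⟨hX, h⟩
      exact or_iff_not_imp_left.2 fun hXV => hgp.eq_of_det2_eq_zero hV hW hX hVW (Ne.symm hXV) h
    · rintro (rfl | rfl)
      · exact ⟨hV, by rw [sub_self, det2_zero_right]⟩
      · exact ⟨hW, det2_self _⟩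
  have hnonpos : S.filter (fun X => ¬ 0 < det2 (W - V) (X - V)) =
      S.filter (fun X => det2 (W - V) (X - V) < 0) ∪
        S.filter (fun X => det2 (W - V) (X - V) = 0) := by
    rw [← filter_or]
    exact filter_congr fun X _ => by rw [not_lt, le_iff_lt_or_eq]
  rw [← card_filter_add_card_filter_not (s := S) (fun X => 0 < det2 (W - V) (X - V)), hnonpos,
    card_union_of_disjoint (disjoint_filter.2 fun X _ h h' => h.ne h'), hzero, card_pair hVW,
    add_assoc]

lemma isHalving_of_card_filter_det2_pos {P : ℝ × ℝ} (hgp : GenPos S) (hP : IsHalving S V P)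
    (hW : W ∈ S) (hVW : V ≠ W)
    (hpos : #(S.filter fun X => 0 < det2 (W - V) (X - V)) = (#S - 2) / 2) :
    IsHalving S V W := by
  obtain ⟨hV, hPS, hVP, hPpos, hPneg⟩ := isHalving_iff.1 hP
  have hsplitP := hgp.card_filter_det2_pos_add_card_filter_det2_neg hV hPS hVP
  have hsplitW := hgp.card_filter_det2_pos_add_card_filter_det2_neg hV hW hVW
  exact isHalving_iff.2 ⟨hV, hW, hVW, hpos, by omega⟩

lemma card_filter_det2_nonneg (hgp : GenPos S) (hW : IsHalving S V W) :
    #((S.erase V).filter fun Y => 0 ≤ det2 (Y - V) (W - V)) = (#S - 2) / 2 + 1 := by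
  classical
  obtain ⟨hV, hWS, hVW, -, hneg⟩ := isHalving_iff.1 hW
  have hsplit : (S.erase V).filter (fun Y => 0 ≤ det2 (Y - V) (W - V)) =
      insert W (S.filter fun Y => det2 (W - V) (Y - V) < 0) := by
    ext Y
    simp only [mem_filter, mem_erase, mem_insert, det2_comm (Y - V), neg_nonneg]
    constructor
    · rintro ⟨⟨hYV, hY⟩, h⟩
      rcases h.lt_or_eq with h | h
      · exact Or.inr ⟨hY, h⟩
      · exact Or.inl (hgp.eq_of_det2_eq_zero hV hWS hY hVW (Ne.symm hYV) h)
    · rintro (rfl | ⟨hY, h⟩)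
      · exact ⟨⟨hVW.symm, hWS⟩, (det2_self _).le⟩
      · refine ⟨⟨fun hYV => ?_, hY⟩, h.le⟩
        rw [hYV, sub_self, det2_zero_right] at h
        exact h.false
  rw [hsplit, card_insert_of_notMem (by simp [det2_self]), hneg]

lemma card_filter_det2_nonneg_erase_erase_of_det2_pos {P Q : ℝ × ℝ} (hgp : GenPos S)
    (hP : IsHalving S V P) (hPQ : 0 < det2 (P - V) (Q - V)) :
    #(((S.erase V).erase Q).filter fun Y => 0 ≤ det2 (Y - V) (P - V)) = (#S - 2) / 2 + 1 := by
  classical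
  have hQ : Q ∉ (S.erase V).filter fun Y => 0 ≤ det2 (Y - V) (P - V) := by
    rw [mem_filter, det2_comm]
    exact fun h => (neg_nonneg.1 h.2).not_gt hPQ
  rw [filter_erase, erase_eq_of_notMem hQ, hgp.card_filter_det2_nonneg hP]

lemma card_filter_det2_nonneg_erase_erase_self (hgp : GenPos S) (hW : IsHalving S V W) :
    #(((S.erase V).erase W).filter fun Y => 0 ≤ det2 (Y - V) (W - V)) = (#S - 2) / 2 := by
  classical
  obtain ⟨-, hWS, hVW, -⟩ := isHalving_iff.1 hW
  have hW_mem : W ∈ (S.erase V).filter fun Y => 0 ≤ det2 (Y - V) (W - V) := by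
    simp [hVW.symm, hWS, det2_self]
  rw [filter_erase, card_erase_of_mem hW_mem, hgp.card_filter_det2_nonneg hW, Nat.add_sub_cancel]

theorem exists_sub_eq_neg_smul_lineMap {P Q : ℝ × ℝ} (hgp : GenPos S) (hP : IsHalving S V P)
    (hQ : IsHalving S V Q) (hPQ : 0 < det2 (P - V) (Q - V)) :
    ∃ Z ∈ S, Z ≠ V ∧ ∃ t ∈ Set.Ioo (0 : ℝ) 1, ∃ μ : ℝ, μ < 0 ∧
      Z - V = μ • lineMap (P - V) (Q - V) t ∧
      #(S.filter fun Y => 0 < det2 (Y - V) (lineMap (P - V) (Q - V) t)) =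
        (#S - 2) / 2 := by
  classical
  obtain ⟨hV, hPS, hVP, -⟩ := isHalving_iff.1 hP
  set T := (S.erase V).erase Q
  set g : ℝ × ℝ → ℝ → ℝ := fun Y t => det2 (Y - V) (lineMap (P - V) (Q - V) t)
  have hg (Y : ℝ × ℝ) (t : ℝ) :
      g Y t = (1 - t) * det2 (Y - V) (P - V) + t * det2 (Y - V) (Q - V) :=
    det2_lineMap_right _ _ _ _
  have hmemT {Y : ℝ × ℝ} : Y ∈ T ↔ Y ≠ Q ∧ Y ≠ V ∧ Y ∈ S := by simp only [T, mem_erase]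
  have h0 : (#S - 2) / 2 < #(T.filter fun Y => 0 ≤ g Y 0) := by
    simp [g, T, hgp.card_filter_det2_nonneg_erase_erase_of_det2_pos hP hPQ]
  have h1 : #(T.filter fun Y => 0 ≤ g Y 1) ≤ (#S - 2) / 2 := by
    simp [g, T, hgp.card_filter_det2_nonneg_erase_erase_self hQ]
  obtain ⟨t, ⟨ht0, ht1⟩, t', ⟨htt', -⟩, hk, hk', hpos⟩ :=
    exists_sign_crossing T g (fun Y _ => by simp only [g, det2_lineMap_right]; fun_prop) h0 h1
  have hsimple : ∀ Y ∈ T, ∀ Y' ∈ T, g Y t = 0 → g Y' t = 0 → Y = Y' := fun Y hY Y' hY' h h' => by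
    rw [hmemT] at hY hY'
    exact (hgp.eq_of_det2_eq_zero_of_det2_eq_zero (lineMap_ne_zero_of_det2_ne_zero hPQ.ne' t) hV
      hY.2.2 hY'.2.2 (Ne.symm hY.2.1) (Ne.symm hY'.2.1) h h').symm
  obtain ⟨Z, hZT, hZt, hZt', hcard⟩ := exists_downcrossing_of_card_drop T g hsimple hk hk' hpos
  obtain ⟨-, hZV, hZS⟩ := hmemT.1 hZT
  have ht_pos : 0 < t := by
    refine ht0.lt_of_ne fun h => ?_
    subst h
    have hZP : Z = P := hgp.eq_of_det2_eq_zero hV hPS hZS hVP (Ne.symm hZV) <| by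
      rw [det2_comm, neg_eq_zero]; simpa [hg] using hZt
    rw [hZP, hg, det2_self, mul_zero, zero_add] at hZt'
    exact (mul_pos htt' hPQ).not_gt hZt'
  have hQ_notMem : Q ∉ (S.filter fun Y => 0 < g Y t).erase V := by
    simp only [mem_erase, mem_filter, hg, det2_self, det2_comm (Q - V), mul_zero, add_zero]
    exact fun h => (mul_pos (sub_pos.2 ht1) hPQ).not_gt (by linarith [h.2.2])
  have hV_notMem : V ∉ S.filter fun Y => 0 < g Y t := by simp [g, det2_zero_left]
  obtain ⟨μ, hμ_neg, hμ⟩ := exists_neg_smul_of_det2_lineMap hPQ htt' hZt hZt'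
  refine ⟨Z, hZS, hZV, t, ⟨ht_pos, ht1⟩, μ, hμ_neg, hμ, ?_⟩
  rwa [filter_erase, filter_erase, erase_eq_of_notMem hQ_notMem,
    erase_eq_of_notMem hV_notMem] at hcard

theorem exists_isHalving_det2_neg_det2_pos {P Q : ℝ × ℝ} (hgp : GenPos S)
    (hP : IsHalving S V P) (hQ : IsHalving S V Q) (hPQ : 0 < det2 (P - V) (Q - V)) :
    ∃ R ∈ S, R ≠ V ∧ IsHalving S V R ∧ det2 (P - V) (R - V) < 0 ∧ 0 < det2 (Q - V) (R - V) := by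
  obtain ⟨R, hRS, hRV, t, ⟨ht0, ht1⟩, μ, hμ_neg, hμ, hcard⟩ :=
    hgp.exists_sub_eq_neg_smul_lineMap hP hQ hPQ
  have hsign (Y : ℝ × ℝ) :
      det2 (R - V) (Y - V) = -μ * det2 (Y - V) (lineMap (P - V) (Q - V) t) := by
    rw [hμ, det2_smul_left, det2_comm]
    ring
  have hRcard : #(S.filter fun Y => 0 < det2 (R - V) (Y - V)) = (#S - 2) / 2 := by
    simpa only [hsign, mul_pos_iff_of_pos_left (neg_pos.2 hμ_neg)] using hcard
  refine ⟨R, hRS, hRV, hgp.isHalving_of_card_filter_det2_pos hP hRS (Ne.symm hRV) hRcard, ?_, ?_⟩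
  · have h := hsign P
    rw [det2_lineMap_right, det2_self, mul_zero, zero_add, det2_comm] at h
    linarith [mul_neg_of_neg_of_pos hμ_neg (mul_pos ht0 hPQ)]
  · have h := hsign Q
    rw [det2_lineMap_right, det2_self, mul_zero, add_zero, det2_comm (R - V),
      det2_comm (Q - V) (P - V)] at h
    linarith [mul_neg_of_neg_of_pos hμ_neg (mul_pos (sub_pos.2 ht1) hPQ)]

end GenPos

theorem stmt_4_general (S : Finset (ℝ × ℝ)) (hgp : GenPos S) (V P Q : ℝ × ℝ) (hPQ : P ≠ Q)
    (h1 : IsHalving S V P) (h2 : IsHalving S V Q) :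
    ∃ R ∈ S, R ≠ V ∧ R ≠ P ∧ R ≠ Q ∧ IsHalving S V R ∧
      ¬ ∃ u : ℝ × ℝ, u ≠ 0 ∧
        0 ≤ dot2 u (P - V) ∧ 0 ≤ dot2 u (Q - V) ∧ 0 ≤ dot2 u (R - V) := by
  wlog hpos : 0 < det2 (P - V) (Q - V) generalizing P Q
  · have hdet : det2 (P - V) (Q - V) ≠ 0 := fun h =>
      hgp V h1.1 P h1.2.1 Q h2.2.1 h1.2.2.1 h2.2.2.1 hPQ (collinear_of_det2_eq_zero h)
    obtain ⟨R, hRS, hRV, hRQ, hRP, hR, hhalf⟩ := this Q P hPQ.symm h2 h1 <| by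
      rw [det2_comm]; exact neg_pos.2 (lt_of_le_of_ne (not_lt.1 hpos) hdet)
    exact ⟨R, hRS, hRV, hRP, hRQ, hR, fun ⟨u, hu, hP, hQ, hR⟩ => hhalf ⟨u, hu, hQ, hP, hR⟩⟩
  obtain ⟨R, hRS, hRV, hR, hPR, hQR⟩ := hgp.exists_isHalving_det2_neg_det2_pos h1 h2 hpos
  refine ⟨R, hRS, hRV, fun h => ?_, fun h => ?_, hR, fun ⟨u, hu, hP, hQ, hR⟩ =>
    hu (eq_zero_of_dot2_nonneg_of_det2 hpos hPR hQR hP hQ hR)⟩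
  · rw [h, det2_self] at hPR; exact hPR.false
  · rw [h, det2_self] at hQR; exact hQR.false

/-- given two halving lines `VP` and `VQ` through a common point `V`,
there is a third halving line `VR` such that the vectors `P - V`, `Q - V`, `R - V`
do not all lie in a single closed half-plane. -/
theorem stmt_4 (S : Finset (ℝ × ℝ)) (heven : Even S.card) (h4 : 4 ≤ S.card)
    (hgp : GenPos S) (V P Q : ℝ × ℝ)
    (hVP : V ≠ P) (hVQ : V ≠ Q) (hPQ : P ≠ Q)
    (h1 : IsHalving S V P) (h2 : IsHalving S V Q) :
    ∃ R ∈ S, R ≠ V ∧ R ≠ P ∧ R ≠ Q ∧ IsHalving S V R ∧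
      ¬ ∃ u : ℝ × ℝ, u ≠ 0 ∧
        0 ≤ dot2 u (P - V) ∧ 0 ≤ dot2 u (Q - V) ∧ 0 ≤ dot2 u (R - V) :=
  stmt_4_general S hgp V P Q hPQ h1 h2
end
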